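/- The least fixed point of the lifted immediate consequence operator contains exactly the minimal models of P: a constraint database D belongs to lfp T_P* if and only if D is a model of P and every model D' of P with D' ≤ D satisfies D' = D. -/
import Mathlib


open scoped Classical

namespace FCLP

/-! ### Terms -/

/-- Ground (Herbrand) terms: uninterpreted function symbols applied to ground terms. -/
inductive GTerm : Type where
  | func : ℕ → List GTerm → GTerm

/-- Terms possibly containing variables. -/
inductive VTerm : Type where
  | var : ℕ → VTerm
  | func : ℕ → List VTerm → VTerm

/-- A substitution is a total map from variables to ground terms. -/
abbrev Subst := ℕ → GTerm

mutual
  /-- Applying a substitution to a term. -/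
  def VTerm.subst (σ : Subst) : VTerm → GTerm
    | .var x => σ x
    | .func f args => .func f (VTerm.substList σ args)
  def VTerm.substList (σ : Subst) : List VTerm → List GTerm
    | [] => []
    | t :: ts => VTerm.subst σ t :: VTerm.substList σ ts
end

/-- The variable `x` occurs in the term. -/
inductive VTerm.HasVar : VTerm → ℕ → Prop where
  | var (x : ℕ) : VTerm.HasVar (.var x) x
  | func {f : ℕ} {args : List VTerm} {t : VTerm} {x : ℕ} :
      t ∈ args → VTerm.HasVar t x → VTerm.HasVar (.func f args) x

/-! ### Attributes, facts, rules, programs -/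

/-- An attribute `p(t₁,...,tₙ)`: a predicate applied to ground terms. -/
structure Attr where
  pred : ℕ
  args : List GTerm

/-- A fact `p(t̄) is v`. -/
structure Fact where
  attr : Attr
  value : GTerm

/-- A premise `p(t̄) is v`, possibly containing variables. -/
structure VAtom where
  pred : ℕ
  args : List VTerm
  value : VTerm

def VAtom.subst (σ : Subst) (A : VAtom) : Fact :=
  ⟨⟨A.pred, A.args.map (VTerm.subst σ)⟩, A.value.subst σ⟩

def VAtom.HasVar (A : VAtom) (x : ℕ) : Prop :=
  (∃ t ∈ A.args, t.HasVar x) ∨ A.value.HasVar x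

/-- A rule head: open `p(t̄) is? v` or closed `p(t̄) is {v₁,...,vₘ}`. -/
inductive Head : Type where
  | opn : ℕ → List VTerm → VTerm → Head
  | closed : ℕ → List VTerm → List VTerm → Head

def Head.HasVar : Head → ℕ → Prop
  | .opn _ args v, x => (∃ t ∈ args, t.HasVar x) ∨ v.HasVar x
  | .closed _ args vs, x => (∃ t ∈ args, t.HasVar x) ∨ ∃ v ∈ vs, v.HasVar x

/-- The ground attribute of a rule head under a substitution. -/
def Head.groundAttr (σ : Subst) : Head → Attr
  | .opn p args _ => ⟨p, args.map (VTerm.subst σ)⟩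
  | .closed p args _ => ⟨p, args.map (VTerm.subst σ)⟩

/-- A rule `H ← F` with a finite collection of premises. -/
structure Rule where
  head : Head
  prems : List VAtom

/-- Wellformedness: closed heads offer at least one value, and every
variable in the head occurs in a premise. -/
def Rule.WF (r : Rule) : Prop :=
  (∀ x, r.head.HasVar x → ∃ A ∈ r.prems, A.HasVar x) ∧
  (∀ p args vs, r.head = .closed p args vs → vs ≠ [])

/-- A program is a set of rules. -/
abbrev Program := Set Rule

/-- A program is a *finite* set of *wellformed* rules. -/
def Program.WFP (P : Program) : Prop := P.Finite ∧ ∀ r ∈ P, r.WF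

/-! ### Fact-set semantics -/

/-- A set of facts is consistent when each attribute has at most one value. -/
def Consistent (D : Set Fact) : Prop :=
  ∀ f ∈ D, ∀ g ∈ D, f.attr = g.attr → f = g

/-- `σ` satisfies the premises `F` in the fact-set database `D`. -/
def satF (σ : Subst) (F : List VAtom) (D : Set Fact) : Prop :=
  ∀ A ∈ F, A.subst σ ∈ D

/-- Fact-set evolution `D →_P S`. -/
inductive Evolve (P : Program) : Set Fact → Set (Set Fact) → Prop where
  | triv (D : Set Fact) : Evolve P D {D}
  | closed {D : Set Fact} {r : Rule} {p : ℕ} {args vs : List VTerm} {σ : Subst} :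
      r ∈ P → r.head = .closed p args vs → satF σ r.prems D →
      Evolve P D
        { E | ∃ v ∈ vs,
            E = insert (⟨⟨p, args.map (VTerm.subst σ)⟩, VTerm.subst σ v⟩ : Fact) D ∧
            Consistent E }
  | opn {D : Set Fact} {r : Rule} {p : ℕ} {args : List VTerm} {v : VTerm} {σ : Subst} :
      r ∈ P → r.head = .opn p args v → satF σ r.prems D →
      Evolve P D
        ({D} ∪ { E | E = insert (⟨⟨p, args.map (VTerm.subst σ)⟩, VTerm.subst σ v⟩ : Fact) D ∧
                     Consistent E })

/-- `P` allows `D` to step to `D'`. -/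
def Step (P : Program) (D D' : Set Fact) : Prop := ∃ S, Evolve P D S ∧ D' ∈ S

/-- A database is saturated when its only evolution is the singleton of itself. -/
def Saturated (P : Program) (D : Set Fact) : Prop := ∀ S, Evolve P D S → S = {D}

/-- A solution: a saturated database reachable from `∅` by a (finite) step sequence. -/
def Solution (P : Program) (D : Set Fact) : Prop :=
  Relation.ReflTransGen (Step P) ∅ D ∧ Saturated P D

/-! ### Constraints and constraint databases -/

/-- A constraint: `just t` or `noneOf X`. -/
inductive Constraint : Type where
  | just : GTerm → Constraint
  | noneOf : Set GTerm → Constraint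

/-- The order on constraints. -/
def Constraint.le : Constraint → Constraint → Prop
  | .noneOf X, .noneOf Y => X ⊆ Y
  | .noneOf X, .just t => t ∉ X
  | .just t, .just t' => t = t'
  | .just _, .noneOf _ => False

instance : LE Constraint := ⟨Constraint.le⟩

/-- Least upper bound of a (compatible) set of constraints: if some `just t` is present
it is the lub; otherwise it is `noneOf` of the union. -/
noncomputable def Constraint.lub (C : Set Constraint) : Constraint :=
  if h : ∃ t, Constraint.just t ∈ C then .just h.choose
  else .noneOf (⋃₀ { X | Constraint.noneOf X ∈ C })

/-- A constraint database: a map from ground attributes to constraints,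
ordered pointwise (via the `Pi` order). -/
abbrev CDB := Attr → Constraint

/-- The least constraint database: every attribute maps to `noneOf ∅`. -/
def cdbBot : CDB := fun _ => .noneOf ∅

/-- Pointwise least upper bound of a (compatible) set of constraint databases. -/
noncomputable def CDB.lub (S : Set CDB) : CDB :=
  fun a => Constraint.lub ((fun Δ => Δ a) '' S)

/-- A subset of a poset is compatible when it has an upper bound. -/
def Compatible {α : Type*} [LE α] (X : Set α) : Prop := ∃ y, ∀ x ∈ X, x ≤ y

/-- Binary compatibility. -/
def Compat {α : Type*} [LE α] (x y : α) : Prop := Compatible ({x, y} : Set α)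

/-- A choice set: a pairwise-incompatible set of constraint databases. -/
def IsChoiceSet (𝒞 : Set CDB) : Prop :=
  ∀ D ∈ 𝒞, ∀ E ∈ 𝒞, Compat D E → D = E

/-- The order on choice sets. -/
def ChoiceLE (𝒞₁ 𝒞₂ : Set CDB) : Prop :=
  ∀ D₂ ∈ 𝒞₂, ∃ D₁ ∈ 𝒞₁, D₁ ≤ D₂

/-- Least upper bound of an indexed family of choice sets:
`⋁ᵢ 𝒞ᵢ = { ⋁ Im(f) : f ∈ ∏ᵢ 𝒞ᵢ, Im(f) compatible }`. -/
noncomputable def ChoiceJoin {I : Type*} (𝒞 : I → Set CDB) : Set CDB :=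
  { E | ∃ f : I → CDB, (∀ i, f i ∈ 𝒞 i) ∧ Compatible (Set.range f) ∧
        E = CDB.lub (Set.range f) }

/-- Least upper bound of a set of choice sets. -/
noncomputable def ChoiceSJoin (S : Set (Set CDB)) : Set CDB :=
  ChoiceJoin (fun C : S => (C : Set CDB))

/-- Greatest lower bound of a set of choice sets:
`⋀ X = ⋁ {𝒞 : ∀ x ∈ X, 𝒞 ≤ x}` (join over choice-set lower bounds). -/
noncomputable def ChoiceMeet (S : Set (Set CDB)) : Set CDB :=
  ChoiceSJoin { C | IsChoiceSet C ∧ ∀ X ∈ S, ChoiceLE C X }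

/-! ### Immediate consequence -/

/-- `σ` satisfies `F` in the constraint database `Δ`. -/
def satC (σ : Subst) (F : List VAtom) (Δ : CDB) : Prop :=
  ∀ A ∈ F, Constraint.just (A.value.subst σ) ≤ Δ ⟨A.pred, A.args.map (VTerm.subst σ)⟩

/-- The constraint database mapping `a` to `c` and every other attribute to `noneOf ∅`. -/
noncomputable def unitCDB (a : Attr) (c : Constraint) : CDB :=
  fun a' => if a' = a then c else .noneOf ∅

/-- The choice set `⟨σH⟩` determined by a ground rule head. -/
noncomputable def headChoice (σ : Subst) : Head → Set CDB
  | .opn p args v =>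
      { unitCDB ⟨p, args.map (VTerm.subst σ)⟩ (.just (v.subst σ)),
        unitCDB ⟨p, args.map (VTerm.subst σ)⟩ (.noneOf {v.subst σ}) }
  | .closed p args vs =>
      { Δ | ∃ v ∈ vs, Δ = unitCDB ⟨p, args.map (VTerm.subst σ)⟩ (.just (v.subst σ)) }

/-- The immediate consequence operator
`T_P(Δ) = {Δ} ∨ ⋁{ ⟨σH⟩ : (H ← F) ∈ P, σ satisfies F in Δ }`. -/
noncomputable def TP (P : Program) (Δ : CDB) : Set CDB :=
  ChoiceSJoin
    (insert {Δ} { C | ∃ r ∈ P, ∃ σ : Subst, satC σ r.prems Δ ∧ C = headChoice σ r.head })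

/-- The attribute-specific immediate consequence operator `T_{P[a]}`. -/
noncomputable def TPa (P : Program) (a : Attr) (Δ : CDB) : Set CDB :=
  ChoiceSJoin
    { C | ∃ r ∈ P, ∃ σ : Subst, satC σ r.prems Δ ∧ r.head.groundAttr σ = a ∧
          C = headChoice σ r.head }

/-- The lifted immediate consequence operator `T_P*(𝒞) = ⋃_{Δ ∈ 𝒞} T_P(Δ)`. -/
noncomputable def TPs (P : Program) (𝒞 : Set CDB) : Set CDB :=
  { E | ∃ Δ ∈ 𝒞, E ∈ TP P Δ }

/-- The least fixed point of `T_P*`, defined à la Knaster–Tarski as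
`⋀ {𝒞 : T_P*(𝒞) ≤ 𝒞}`. -/
noncomputable def lfpTPs (P : Program) : Set CDB :=
  ChoiceMeet { C | IsChoiceSet C ∧ ChoiceLE (TPs P C) C }

/-! ### Positive and finite constraint databases, promotion and erasure -/

/-- A constraint database is positive when `noneOf X` only occurs with `X = ∅`. -/
def CDBPositive (Δ : CDB) : Prop := ∀ a X, Δ a = .noneOf X → X = ∅

/-- A constraint database is finite. -/
def CDBFinite (Δ : CDB) : Prop :=
  { a | Δ a ≠ .noneOf ∅ }.Finite ∧ ∀ a X, Δ a = .noneOf X → X.Finite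

/-- Promotion of a (consistent) fact set to a constraint database. -/
noncomputable def promote (D : Set Fact) : CDB :=
  fun a => if h : ∃ v, (⟨a, v⟩ : Fact) ∈ D then .just h.choose else .noneOf ∅

/-- Erasure of a constraint database to a fact set. -/
def eraseCDB (Δ : CDB) : Set Fact := { f | Δ f.attr = .just f.value }

/-! ### The abstract algorithm -/

/-- `P` allows `Δ` to take an algorithmic step to any `Δ' ∈ {Δ} ∨ T_{P[a]}(Δ)`
for some attribute `a`, provided `T_P(Δ) ≠ ∅`. -/
noncomputable def AlgStep (P : Program) (Δ Δ' : CDB) : Prop :=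
  TP P Δ ≠ ∅ ∧ ∃ a : Attr, Δ' ∈ ChoiceSJoin {({Δ} : Set CDB), TPa P a Δ}

/-! ### Datalog -/

/-- A datalog atom, possibly with variables. -/
structure DAtom where
  pred : ℕ
  args : List VTerm

/-- A ground datalog atom. -/
structure GAtom where
  pred : ℕ
  args : List GTerm

def DAtom.subst (σ : Subst) (A : DAtom) : GAtom := ⟨A.pred, A.args.map (VTerm.subst σ)⟩

/-- A datalog rule `p(t̄) ← p₁(t̄₁), ..., pₙ(t̄ₙ)`. -/
structure DRule where
  head : DAtom
  prems : List DAtom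

/-- Every variable of the head appears in a premise. -/
def DRule.WF (r : DRule) : Prop :=
  ∀ x, (∃ t ∈ r.head.args, t.HasVar x) → ∃ A ∈ r.prems, ∃ t ∈ A.args, t.HasVar x

/-- The datalog immediate consequence operator. -/
def dImmCons (P : Set DRule) (X : Set GAtom) : Set GAtom :=
  { g | ∃ r ∈ P, ∃ σ : Subst, (∀ A ∈ r.prems, A.subst σ ∈ X) ∧ g = r.head.subst σ }

/-- The least model of a datalog program: the least fixed point of `dImmCons`. -/
def dModel (P : Set DRule) : Set GAtom := ⋂₀ { X | dImmCons P X ⊆ X }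

/-- Translation of a datalog program to a finite-choice logic program, using the
constant with (fresh) function symbol `u` as the value `unit`. -/
def trDatalog (u : ℕ) (P : Set DRule) : Program :=
  { r | ∃ dr ∈ P,
      r = ⟨Head.closed dr.head.pred dr.head.args [VTerm.func u []],
           dr.prems.map (fun A => ⟨A.pred, A.args, VTerm.func u []⟩)⟩ }

/-! ### Answer set programming -/

/-- A ground ASP rule `p ← p₁,...,pₙ, ¬q₁,...,¬qₘ` over propositional atoms. -/
structure ASPRule where
  head : ℕ
  pos : List ℕ
  neg : List ℕ

/-- One step of the immediate consequence operator of the reduct `P^X`. -/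
def reductCons (P : Set ASPRule) (X : Set ℕ) (Y : Set ℕ) : Set ℕ :=
  { p | ∃ r ∈ P, r.head = p ∧ (∀ q ∈ r.pos, q ∈ Y) ∧ (∀ q ∈ r.neg, q ∉ X) }

/-- The least model of the reduct `P^X`. -/
def reductModel (P : Set ASPRule) (X : Set ℕ) : Set ℕ :=
  ⋂₀ { Y | reductCons P X Y ⊆ Y }

/-- `X` is a stable model of `P` when the least model of the reduct `P^X` equals `X`. -/
def StableModel (P : Set ASPRule) (X : Set ℕ) : Prop := reductModel P X = X

/-- The fresh constant `tt` (as a ground term). -/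
def ttT : GTerm := .func 0 []
/-- The fresh constant `ff` (as a ground term). -/
def ffT : GTerm := .func 1 []
/-- The constant `tt` as a (closed) term of the rule language. -/
def ttV : VTerm := .func 0 []
/-- The constant `ff` as a (closed) term of the rule language. -/
def ffV : VTerm := .func 1 []

/-- The premise `p is tt`. -/
def posPrem (p : ℕ) : VAtom := ⟨p, [], ttV⟩
/-- The premise `q is ff`. -/
def negPrem (q : ℕ) : VAtom := ⟨q, [], ffV⟩

/-- Translation of an ASP program to a finite-choice logic program: each rule
`p ← p₁,...,pₙ, ¬q₁,...,¬qₘ` becomes `m` open rules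
`qⱼ is? ff ← p₁ is tt,...,pₙ is tt, q₁ is ff,...,q_{j-1} is ff` and one closed rule
`p is {tt} ← p₁ is tt,...,pₙ is tt, q₁ is ff,...,qₘ is ff`. -/
def trASP (P : Set ASPRule) : Program :=
  { r | ∃ ar ∈ P,
      (∃ j : Fin ar.neg.length,
        r = ⟨Head.opn (ar.neg.get j) [] ffV,
             ar.pos.map posPrem ++ (ar.neg.take j.val).map negPrem⟩) ∨
      r = ⟨Head.closed ar.head [] [ttV],
           ar.pos.map posPrem ++ ar.neg.map negPrem⟩ }


/-! ### Auxiliary lemmas for the main theorem -/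

section Aux

@[simp] lemma Constraint.just_le_just {t t' : GTerm} :
    (Constraint.just t ≤ Constraint.just t') ↔ t = t' := Iff.rfl
@[simp] lemma Constraint.noneOf_le_noneOf {X Y : Set GTerm} :
    (Constraint.noneOf X ≤ Constraint.noneOf Y) ↔ X ⊆ Y := Iff.rfl
@[simp] lemma Constraint.noneOf_le_just {X : Set GTerm} {t : GTerm} :
    (Constraint.noneOf X ≤ Constraint.just t) ↔ t ∉ X := Iff.rfl
@[simp] lemma Constraint.just_le_noneOf {t : GTerm} {X : Set GTerm} :
    (Constraint.just t ≤ Constraint.noneOf X) ↔ False := Iff.rfl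

lemma Constraint.le_refl (c : Constraint) : c ≤ c := by
  cases c with
  | just t => exact rfl
  | noneOf X => exact fun _ h => h

lemma Constraint.le_trans : ∀ {a b c : Constraint}, a ≤ b → b ≤ c → a ≤ c
  | .just _, .just _, .just _, h1, h2 => Eq.trans h1 h2
  | .just _, .just _, .noneOf _, _, h2 => h2.elim
  | .just _, .noneOf _, _, h1, _ => h1.elim
  | .noneOf _, .noneOf _, .noneOf _, h1, h2 => fun x hx => h2 (h1 hx)
  | .noneOf _, .noneOf _, .just _, h1, h2 => fun ht => h2 (h1 ht)
  | .noneOf _, .just _, .just _, h1, h2 => by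
      simp only [Constraint.just_le_just] at h2; subst h2; exact h1
  | .noneOf _, .just _, .noneOf _, _, h2 => h2.elim

lemma Constraint.le_antisymm : ∀ {a b : Constraint}, a ≤ b → b ≤ a → a = b
  | .just _, .just _, h1, _ => by simp only [Constraint.just_le_just] at h1; rw [h1]
  | .just _, .noneOf _, h1, _ => h1.elim
  | .noneOf _, .just _, _, h2 => h2.elim
  | .noneOf _, .noneOf _, h1, h2 => by rw [Set.Subset.antisymm h1 h2]

lemma Constraint.just_le_iff {t : GTerm} {d : Constraint} :
    Constraint.just t ≤ d ↔ d = .just t := by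
  cases d with
  | just t' =>
    show t = t' ↔ _
    constructor
    · rintro rfl; rfl
    · intro h; injection h with h; exact h.symm
  | noneOf X => simp

lemma Constraint.bot_le (c : Constraint) : Constraint.noneOf ∅ ≤ c := by
  cases c with
  | just t => exact Set.notMem_empty t
  | noneOf X => exact Set.empty_subset X

lemma CDB.le_def {D E : CDB} : D ≤ E ↔ ∀ a, D a ≤ E a := Iff.rfl

lemma CDB.le_refl (D : CDB) : D ≤ D := fun _ => Constraint.le_refl _
lemma CDB.le_trans {D E F : CDB} (h1 : D ≤ E) (h2 : E ≤ F) : D ≤ F :=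
  fun a => Constraint.le_trans (h1 a) (h2 a)
lemma CDB.le_antisymm {D E : CDB} (h1 : D ≤ E) (h2 : E ≤ D) : D = E :=
  funext fun a => Constraint.le_antisymm (h1 a) (h2 a)

lemma Constraint.le_lub {S : Set Constraint} {u : Constraint} (hu : ∀ c ∈ S, c ≤ u)
    {c : Constraint} (hc : c ∈ S) : c ≤ Constraint.lub S := by
  unfold Constraint.lub
  split
  next h =>
    have h1 := h.choose_spec
    have h2 := hu _ h1
    have h3 := hu _ hc
    cases u with
    | noneOf X => exact h2.elim
    | just t =>
      simp only [Constraint.just_le_just] at h2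
      subst h2; exact h3
  next h =>
    cases c with
    | just t => exact (h ⟨t, hc⟩).elim
    | noneOf X => exact fun x hx => Set.mem_sUnion.2 ⟨X, hc, hx⟩

lemma Constraint.lub_le {S : Set Constraint} {u : Constraint} (hu : ∀ c ∈ S, c ≤ u) :
    Constraint.lub S ≤ u := by
  unfold Constraint.lub
  split
  next h => exact hu _ h.choose_spec
  next h =>
    cases u with
    | just t =>
      intro ht
      obtain ⟨X, hX, htX⟩ := Set.mem_sUnion.1 ht
      exact hu _ hX htX
    | noneOf Y =>
      intro x hx
      obtain ⟨X, hX, hxX⟩ := Set.mem_sUnion.1 hx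
      exact hu _ hX hxX

lemma CDB.le_lub {S : Set CDB} {u : CDB} (hu : ∀ x ∈ S, x ≤ u) {x : CDB} (hx : x ∈ S) :
    x ≤ CDB.lub S :=
  fun a => Constraint.le_lub (u := u a)
    (fun _ hc => by obtain ⟨Δ, hΔ, rfl⟩ := hc; exact hu Δ hΔ a) ⟨x, hx, rfl⟩

lemma CDB.lub_le {S : Set CDB} {u : CDB} (hu : ∀ x ∈ S, x ≤ u) : CDB.lub S ≤ u :=
  fun a => Constraint.lub_le (fun _ hc => by obtain ⟨Δ, hΔ, rfl⟩ := hc; exact hu Δ hΔ a)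

lemma compat_of_le {D E U : CDB} (h1 : D ≤ U) (h2 : E ≤ U) : Compat D E :=
  ⟨U, by rintro x hx; rcases hx with rfl | rfl; exacts [h1, h2]⟩

end Aux

section Aux2

lemma unitCDB_le_iff {a : Attr} {c : Constraint} {Δ : CDB} :
    unitCDB a c ≤ Δ ↔ c ≤ Δ a := by
  constructor
  · intro h
    have := h a
    simpa [unitCDB] using this
  · intro h a'
    by_cases ha : a' = a
    · subst ha; simpa [unitCDB] using h
    · simp only [unitCDB, if_neg ha]
      exact Constraint.bot_le _

/-- The immediate-consequence operator is "supported" at `Δ`. -/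
def Supported (P : Program) (Δ : CDB) : Prop :=
  ∀ r ∈ P, ∀ σ : Subst, satC σ r.prems Δ → ∃ c ∈ headChoice σ r.head, c ≤ Δ

lemma satC_mono {σ : Subst} {F : List VAtom} {Δ Δ' : CDB} (h : Δ ≤ Δ')
    (hs : satC σ F Δ) : satC σ F Δ' :=
  fun A hA => Constraint.le_trans (hs A hA) (h _)

lemma mem_headChoice_opn {σ : Subst} {p : ℕ} {args : List VTerm} {v : VTerm} {c : CDB} :
    c ∈ headChoice σ (Head.opn p args v) ↔
      c = unitCDB ⟨p, args.map (VTerm.subst σ)⟩ (.just (v.subst σ)) ∨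
      c = unitCDB ⟨p, args.map (VTerm.subst σ)⟩ (.noneOf {v.subst σ}) := by
  simp [headChoice]

lemma mem_headChoice_closed {σ : Subst} {p : ℕ} {args vs : List VTerm} {c : CDB} :
    c ∈ headChoice σ (Head.closed p args vs) ↔
      ∃ v ∈ vs, c = unitCDB ⟨p, args.map (VTerm.subst σ)⟩ (.just (v.subst σ)) := Iff.rfl

/-- Core compatibility lemma: if `Δ` is supported then any head option compatible with `Δ`
(through a common upper bound `U`) lies below `Δ`. -/
lemma option_le_of_compat {P : Program} {Δ : CDB} (hs : Supported P Δ)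
    {r : Rule} (hr : r ∈ P) {σ : Subst} (hσ : satC σ r.prems Δ)
    {c : CDB} (hc : c ∈ headChoice σ r.head) {U : CDB} (hcU : c ≤ U) (hΔU : Δ ≤ U) :
    c ≤ Δ := by
  obtain ⟨c₀, hc₀, hc₀Δ⟩ := hs r hr σ hσ
  cases hhead : r.head with
  | opn p args v =>
    rw [hhead] at hc hc₀
    set a : Attr := ⟨p, args.map (VTerm.subst σ)⟩ with ha
    set w : GTerm := v.subst σ with hw
    have hsupp : Constraint.just w ≤ Δ a ∨ Constraint.noneOf {w} ≤ Δ a := by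
      rcases mem_headChoice_opn.1 hc₀ with rfl | rfl
      · exact Or.inl (unitCDB_le_iff.1 hc₀Δ)
      · exact Or.inr (unitCDB_le_iff.1 hc₀Δ)
    rcases mem_headChoice_opn.1 hc with rfl | rfl
    · -- c = unit a (just w)
      rw [unitCDB_le_iff]
      have hwU : Constraint.just w ≤ U a := unitCDB_le_iff.1 hcU
      rw [Constraint.just_le_iff] at hwU
      have hΔa : Δ a ≤ U a := hΔU a
      rw [hwU] at hΔa
      rcases hsupp with h1 | h1
      · exact h1
      · -- noneOf {w} ≤ Δ a  and  Δ a ≤ just w : contradiction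
        exfalso
        cases hΔa' : Δ a with
        | just t =>
          rw [hΔa'] at hΔa h1
          simp only [Constraint.just_le_just] at hΔa
          subst hΔa
          simp at h1
        | noneOf X =>
          rw [hΔa'] at hΔa h1
          simp only [Constraint.noneOf_le_just] at hΔa
          simp only [Constraint.noneOf_le_noneOf, Set.singleton_subset_iff] at h1
          exact hΔa h1
    · -- c = unit a (noneOf {w})
      rw [unitCDB_le_iff]
      rcases hsupp with h1 | h1
      · -- Δ a = just w, but noneOf{w} ≤ U a and Δ a ≤ U a : contradiction
        exfalso
        rw [Constraint.just_le_iff] at h1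
        have h2 : Constraint.noneOf {w} ≤ U a := unitCDB_le_iff.1 hcU
        have h3 : Δ a ≤ U a := hΔU a
        rw [h1] at h3
        rw [Constraint.just_le_iff] at h3
        rw [h3] at h2
        simp at h2
      · exact h1
  | closed p args vs =>
    rw [hhead] at hc hc₀
    set a : Attr := ⟨p, args.map (VTerm.subst σ)⟩ with ha
    obtain ⟨v₀, hv₀, rfl⟩ := mem_headChoice_closed.1 hc₀
    obtain ⟨v₁, hv₁, rfl⟩ := mem_headChoice_closed.1 hc
    have hΔa : Δ a = Constraint.just (v₀.subst σ) := Constraint.just_le_iff.1 (unitCDB_le_iff.1 hc₀Δ)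
    have h1 : Constraint.just (v₁.subst σ) ≤ U a := unitCDB_le_iff.1 hcU
    rw [Constraint.just_le_iff] at h1
    have h2 : Δ a ≤ U a := hΔU a
    rw [hΔa, h1] at h2
    simp only [Constraint.just_le_just] at h2
    rw [unitCDB_le_iff, hΔa, h2]
    exact Constraint.le_refl _

lemma mem_TP_iff {P : Program} {Δ E : CDB} :
    E ∈ TP P Δ ↔ ∃ f : ↥(insert {Δ} { C | ∃ r ∈ P, ∃ σ : Subst, satC σ r.prems Δ ∧ C = headChoice σ r.head } : Set (Set CDB)) → CDB,
      (∀ i, f i ∈ i.1) ∧ Compatible (Set.range f) ∧ E = CDB.lub (Set.range f) :=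
  Iff.rfl

end Aux2

section Aux3

lemma mem_TP_self_of_supported {P : Program} {Δ : CDB} (hs : Supported P Δ) :
    Δ ∈ TP P Δ := by
  rw [mem_TP_iff]
  have ex : ∀ i : ↥(insert {Δ} { C | ∃ r ∈ P, ∃ σ : Subst, satC σ r.prems Δ ∧ C = headChoice σ r.head } : Set (Set CDB)),
      ∃ c, c ∈ i.1 ∧ c ≤ Δ := by
    rintro ⟨C, hC⟩
    rcases Set.mem_insert_iff.1 hC with rfl | ⟨r, hr, σ, hσ, rfl⟩
    · exact ⟨Δ, rfl, CDB.le_refl Δ⟩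
    · obtain ⟨c, hc1, hc2⟩ := hs r hr σ hσ
      exact ⟨c, hc1, hc2⟩
  refine ⟨fun i => (ex i).choose, fun i => (ex i).choose_spec.1, ⟨Δ, ?_⟩, ?_⟩
  · rintro x ⟨i, rfl⟩; exact (ex i).choose_spec.2
  · set i₀ : ↥(insert {Δ} { C | ∃ r ∈ P, ∃ σ : Subst, satC σ r.prems Δ ∧ C = headChoice σ r.head } : Set (Set CDB)) :=
      ⟨{Δ}, Set.mem_insert _ _⟩ with hi₀
    have hfi₀ : (ex i₀).choose = Δ := (ex i₀).choose_spec.1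
    have h1 : CDB.lub (Set.range fun i => (ex i).choose) ≤ Δ :=
      CDB.lub_le (by rintro x ⟨i, rfl⟩; exact (ex i).choose_spec.2)
    have h2 : Δ ≤ CDB.lub (Set.range fun i => (ex i).choose) :=
      CDB.le_lub (u := Δ) (by rintro x ⟨i, rfl⟩; exact (ex i).choose_spec.2) ⟨i₀, hfi₀⟩
    exact CDB.le_antisymm h2 h1

lemma TP_eq_singleton_of_supported {P : Program} {Δ : CDB} (hs : Supported P Δ) :
    TP P Δ = {Δ} := by
  refine Set.eq_singleton_iff_unique_mem.2 ⟨mem_TP_self_of_supported hs, ?_⟩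
  intro E hE
  rw [mem_TP_iff] at hE
  obtain ⟨f, hf, ⟨U, hU⟩, rfl⟩ := hE
  set i₀ : ↥(insert {Δ} { C | ∃ r ∈ P, ∃ σ : Subst, satC σ r.prems Δ ∧ C = headChoice σ r.head } : Set (Set CDB)) :=
    ⟨{Δ}, Set.mem_insert _ _⟩ with hi₀
  have hfi₀ : f i₀ = Δ := hf i₀
  have hΔU : Δ ≤ U := hfi₀ ▸ hU _ ⟨i₀, rfl⟩
  have hall : ∀ i, f i ≤ Δ := by
    intro i
    rcases Set.mem_insert_iff.1 i.2 with h | ⟨r, hr, σ, hσ, hC⟩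
    · have : f i ∈ ({Δ} : Set CDB) := h ▸ hf i
      rw [this]; exact CDB.le_refl Δ
    · have hmem : f i ∈ headChoice σ r.head := hC ▸ hf i
      exact option_le_of_compat hs hr hσ hmem (hU _ ⟨i, rfl⟩) hΔU
  have h1 : CDB.lub (Set.range f) ≤ Δ :=
    CDB.lub_le (by rintro x ⟨i, rfl⟩; exact hall i)
  have h2 : Δ ≤ CDB.lub (Set.range f) :=
    CDB.le_lub (u := Δ) (by rintro x ⟨i, rfl⟩; exact hall i) ⟨i₀, hfi₀⟩
  exact CDB.le_antisymm h1 h2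

lemma supported_of_mem_TP_self {P : Program} {Δ : CDB} (h : Δ ∈ TP P Δ) : Supported P Δ := by
  rw [mem_TP_iff] at h
  obtain ⟨f, hf, ⟨U, hU⟩, hlub⟩ := h
  intro r hr σ hσ
  set i : ↥(insert {Δ} { C | ∃ r ∈ P, ∃ σ : Subst, satC σ r.prems Δ ∧ C = headChoice σ r.head } : Set (Set CDB)) :=
    ⟨headChoice σ r.head, Set.mem_insert_iff.2 (Or.inr ⟨r, hr, σ, hσ, rfl⟩)⟩ with hi
  refine ⟨f i, hf i, ?_⟩
  have h1 : f i ≤ CDB.lub (Set.range f) :=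
    CDB.le_lub (u := U) (by rintro x ⟨j, rfl⟩; exact hU _ ⟨j, rfl⟩) ⟨i, rfl⟩
  rwa [← hlub] at h1

lemma mem_TP_ge {P : Program} {Δ E : CDB} (h : E ∈ TP P Δ) : Δ ≤ E := by
  rw [mem_TP_iff] at h
  obtain ⟨f, hf, ⟨U, hU⟩, rfl⟩ := h
  set i₀ : ↥(insert {Δ} { C | ∃ r ∈ P, ∃ σ : Subst, satC σ r.prems Δ ∧ C = headChoice σ r.head } : Set (Set CDB)) :=
    ⟨{Δ}, Set.mem_insert _ _⟩ with hi₀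
  have hfi₀ : f i₀ = Δ := hf i₀
  exact CDB.le_lub (u := U) (by rintro x ⟨j, rfl⟩; exact hU _ ⟨j, rfl⟩) ⟨i₀, hfi₀⟩

lemma model_iff_supported {P : Program} {Δ : CDB} : TP P Δ = {Δ} ↔ Supported P Δ := by
  constructor
  · intro h
    exact supported_of_mem_TP_self (by rw [h]; rfl)
  · exact TP_eq_singleton_of_supported

lemma model_of_mem_prefixed {P : Program} {X : Set CDB} (hXcs : IsChoiceSet X)
    (hpre : ChoiceLE (TPs P X) X) {E : CDB} (hE : E ∈ X) : TP P E = {E} := by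
  obtain ⟨D, hD, hDE⟩ := hpre E hE
  obtain ⟨Δ', hΔ', hDTP⟩ := hD
  have hΔ'D : Δ' ≤ D := mem_TP_ge hDTP
  have hΔ'E : Δ' = E := hXcs Δ' hΔ' E hE (compat_of_le (CDB.le_trans hΔ'D hDE) (CDB.le_refl E))
  subst hΔ'E
  have hED : Δ' ≤ D := hΔ'D
  have : D = Δ' := CDB.le_antisymm hDE hED
  subst this
  exact TP_eq_singleton_of_supported (supported_of_mem_TP_self hDTP)

end Aux3

section Aux4

/-- Binary greatest lower bound of constraints (used only for compatible pairs). -/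
noncomputable def Constraint.glb : Constraint → Constraint → Constraint
  | .just t, .just _ => .just t
  | .just t, .noneOf X => .noneOf (X \ {t})
  | .noneOf X, .just t => .noneOf (X \ {t})
  | .noneOf X, .noneOf Y => .noneOf (X ∩ Y)

lemma Constraint.glb_le_left : ∀ (c d : Constraint), Constraint.glb c d ≤ c
  | .just _, .just _ => rfl
  | .just t, .noneOf _ => by
      show Constraint.noneOf _ ≤ Constraint.just t
      simp
  | .noneOf X, .just t => fun x hx => hx.1
  | .noneOf X, .noneOf Y => fun x hx => hx.1

lemma Constraint.glb_le_right : ∀ (c d : Constraint), (∃ u, c ≤ u ∧ d ≤ u) →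
    Constraint.glb c d ≤ d
  | .just t, .just t', ⟨u, h1, h2⟩ => by
      rw [Constraint.just_le_iff] at h1 h2
      rw [h1] at h2
      injection h2 with h2
      first
      | exact (show Constraint.just t ≤ Constraint.just t' from h2)
      | skip
  | .just t, .noneOf X, _ => fun x hx => hx.1
  | .noneOf X, .just t, _ => by
      show Constraint.noneOf _ ≤ Constraint.just t
      simp
  | .noneOf X, .noneOf Y, _ => fun x hx => hx.2

noncomputable def CDB.glb (D E : CDB) : CDB := fun a => Constraint.glb (D a) (E a)

lemma CDB.glb_le_left (D E : CDB) : CDB.glb D E ≤ D :=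
  fun a => Constraint.glb_le_left _ _

lemma CDB.glb_le_right {D E : CDB} (h : Compat D E) : CDB.glb D E ≤ E := by
  obtain ⟨U, hU⟩ := h
  intro a
  refine Constraint.glb_le_right _ _ ⟨U a, ?_, ?_⟩
  · exact hU D (Set.mem_insert _ _) a
  · exact hU E (Set.mem_insert_of_mem _ rfl) a

/-- Helper for the open-head case of the glb-supportedness argument. -/
lemma open_glb_helper {c d : Constraint} {w : GTerm} (hcompat : ∃ u, c ≤ u ∧ d ≤ u)
    (hc : Constraint.just w ≤ c ∨ Constraint.noneOf {w} ≤ c)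
    (hd : Constraint.just w ≤ d ∨ Constraint.noneOf {w} ≤ d) :
    Constraint.just w ≤ Constraint.glb c d ∨ Constraint.noneOf {w} ≤ Constraint.glb c d := by
  obtain ⟨u, hcu, hdu⟩ := hcompat
  cases c with
  | just t =>
    cases d with
    | just t' =>
      exact hc
    | noneOf X =>
      -- glb = noneOf (X \ {t}); compat gives t ∉ X; hd gives w ∈ X
      rw [Constraint.just_le_iff] at hcu
      subst hcu
      simp only [Constraint.noneOf_le_just] at hdu
      rcases hd with h | h
      · exact h.elim
      · simp only [Constraint.noneOf_le_noneOf, Set.singleton_subset_iff] at h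
        refine Or.inr ?_
        show ({w} : Set GTerm) ⊆ X \ {t}
        rw [Set.singleton_subset_iff]
        exact ⟨h, by rintro rfl; exact hdu h⟩
  | noneOf X =>
    cases d with
    | just t =>
      rw [Constraint.just_le_iff] at hdu
      subst hdu
      simp only [Constraint.noneOf_le_just] at hcu
      rcases hc with h | h
      · exact h.elim
      · simp only [Constraint.noneOf_le_noneOf, Set.singleton_subset_iff] at h
        refine Or.inr ?_
        show ({w} : Set GTerm) ⊆ X \ {t}
        rw [Set.singleton_subset_iff]
        exact ⟨h, by rintro rfl; exact hcu h⟩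
    | noneOf Y =>
      rcases hc with h | h
      · exact h.elim
      rcases hd with h' | h'
      · exact h'.elim
      simp only [Constraint.noneOf_le_noneOf, Set.singleton_subset_iff] at h h'
      refine Or.inr ?_
      show ({w} : Set GTerm) ⊆ X ∩ Y
      rw [Set.singleton_subset_iff]
      exact ⟨h, h'⟩

lemma supported_glb {P : Program} {D E : CDB} (hcompat : Compat D E)
    (hD : Supported P D) (hE : Supported P E) : Supported P (CDB.glb D E) := by
  intro r hr σ hσ
  have hsatD : satC σ r.prems D := satC_mono (CDB.glb_le_left D E) hσ
  have hsatE : satC σ r.prems E := satC_mono (CDB.glb_le_right hcompat) hσ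
  obtain ⟨U, hU⟩ := hcompat
  have hDU : D ≤ U := hU D (Set.mem_insert _ _)
  have hEU : E ≤ U := hU E (Set.mem_insert_of_mem _ rfl)
  obtain ⟨cD, hcD, hcDle⟩ := hD r hr σ hsatD
  obtain ⟨cE, hcE, hcEle⟩ := hE r hr σ hsatE
  cases hhead : r.head with
  | opn p args v =>
    rw [hhead] at hcD hcE
    set a : Attr := ⟨p, args.map (VTerm.subst σ)⟩ with ha
    set w : GTerm := v.subst σ with hw
    have hsD : Constraint.just w ≤ D a ∨ Constraint.noneOf {w} ≤ D a := by
      rcases mem_headChoice_opn.1 hcD with rfl | rfl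
      · exact Or.inl (unitCDB_le_iff.1 hcDle)
      · exact Or.inr (unitCDB_le_iff.1 hcDle)
    have hsE : Constraint.just w ≤ E a ∨ Constraint.noneOf {w} ≤ E a := by
      rcases mem_headChoice_opn.1 hcE with rfl | rfl
      · exact Or.inl (unitCDB_le_iff.1 hcEle)
      · exact Or.inr (unitCDB_le_iff.1 hcEle)
    have := open_glb_helper (c := D a) (d := E a) ⟨U a, hDU a, hEU a⟩ hsD hsE
    rcases this with h | h
    · exact ⟨_, mem_headChoice_opn.2 (Or.inl rfl), unitCDB_le_iff.2 h⟩
    · exact ⟨_, mem_headChoice_opn.2 (Or.inr rfl), unitCDB_le_iff.2 h⟩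
  | closed p args vs =>
    rw [hhead] at hcD hcE
    set a : Attr := ⟨p, args.map (VTerm.subst σ)⟩ with ha
    obtain ⟨v₀, hv₀, rfl⟩ := mem_headChoice_closed.1 hcD
    obtain ⟨v₁, hv₁, rfl⟩ := mem_headChoice_closed.1 hcE
    have hDa : D a = Constraint.just (v₀.subst σ) :=
      Constraint.just_le_iff.1 (unitCDB_le_iff.1 hcDle)
    have hEa : E a = Constraint.just (v₁.subst σ) :=
      Constraint.just_le_iff.1 (unitCDB_le_iff.1 hcEle)
    have h1 : U a = Constraint.just (v₀.subst σ) := by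
      have := hDU a; rw [hDa] at this; exact Constraint.just_le_iff.1 this
    have h2 : U a = Constraint.just (v₁.subst σ) := by
      have := hEU a; rw [hEa] at this; exact Constraint.just_le_iff.1 this
    have heq : v₀.subst σ = v₁.subst σ := by
      rw [h1] at h2; injection h2
    refine ⟨_, mem_headChoice_closed.2 ⟨v₀, hv₀, rfl⟩, unitCDB_le_iff.2 ?_⟩
    show Constraint.just (v₀.subst σ) ≤ Constraint.glb (D a) (E a)
    rw [hDa, hEa, heq]
    exact Constraint.le_refl _

lemma minimal_models_choiceSet (P : Program) :
    IsChoiceSet {D : CDB | TP P D = {D} ∧ ∀ D', TP P D' = {D'} → D' ≤ D → D' = D} := by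
  rintro D ⟨hD1, hD2⟩ E ⟨hE1, hE2⟩ hcompat
  have hsD : Supported P D := model_iff_supported.1 hD1
  have hsE : Supported P E := model_iff_supported.1 hE1
  have hglb : Supported P (CDB.glb D E) := supported_glb hcompat hsD hsE
  have hmodel : TP P (CDB.glb D E) = {CDB.glb D E} := TP_eq_singleton_of_supported hglb
  have h1 : CDB.glb D E = D := hD2 _ hmodel (CDB.glb_le_left D E)
  have h2 : CDB.glb D E = E := hE2 _ hmodel (CDB.glb_le_right hcompat)
  rw [← h1, h2]

end Aux4

section Aux5

/-- Infimum of a chain of constraints. -/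
noncomputable def Constraint.cInf (S : Set Constraint) : Constraint :=
  if h : ∃ X, Constraint.noneOf X ∈ S then .noneOf (⋂₀ {X | Constraint.noneOf X ∈ S})
  else if h2 : ∃ t, Constraint.just t ∈ S then .just h2.choose
  else .noneOf ∅

lemma Constraint.cInf_le {S : Set Constraint} (hcomp : ∀ c ∈ S, ∀ d ∈ S, c ≤ d ∨ d ≤ c)
    {c : Constraint} (hc : c ∈ S) : Constraint.cInf S ≤ c := by
  unfold Constraint.cInf
  split
  next h =>
    cases c with
    | noneOf Y =>
      intro x hx
      exact Set.mem_sInter.1 hx Y hc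
    | just t =>
      obtain ⟨X, hX⟩ := h
      rcases hcomp _ hX _ hc with h1 | h1
      · intro ht
        exact h1 (Set.mem_sInter.1 ht _ hX)
      · exact h1.elim
  next h =>
    split
    next h2 =>
      have hs := h2.choose_spec
      cases c with
      | noneOf X => exact (h ⟨X, hc⟩).elim
      | just t =>
        rcases hcomp _ hs _ hc with h1 | h1
        · exact h1
        · show h2.choose = t
          simp only [Constraint.just_le_just] at h1
          exact h1.symm
    next h2 =>
      cases c with
      | noneOf X => exact (h ⟨X, hc⟩).elim
      | just t => exact (h2 ⟨t, hc⟩).elim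

noncomputable def CDB.cInf (C : Set CDB) : CDB :=
  fun a => Constraint.cInf ((fun Δ => Δ a) '' C)

lemma CDB.cInf_le {C : Set CDB} (hchain : ∀ D ∈ C, ∀ E ∈ C, D ≤ E ∨ E ≤ D)
    {Δ : CDB} (hΔ : Δ ∈ C) : CDB.cInf C ≤ Δ := by
  intro a
  refine Constraint.cInf_le ?_ ⟨Δ, hΔ, rfl⟩
  rintro c ⟨D, hD, rfl⟩ d ⟨E, hE, rfl⟩
  rcases hchain D hD E hE with h | h
  · exact Or.inl (h a)
  · exact Or.inr (h a)

lemma supported_cInf {P : Program} {C : Set CDB} (hne : C.Nonempty)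
    (hchain : ∀ D ∈ C, ∀ E ∈ C, D ≤ E ∨ E ≤ D)
    (hsup : ∀ D ∈ C, Supported P D) : Supported P (CDB.cInf C) := by
  intro r hr σ hσ
  have happ : ∀ D ∈ C, satC σ r.prems D :=
    fun D hD => satC_mono (CDB.cInf_le hchain hD) hσ
  cases hhead : r.head with
  | closed p args vs =>
    set a : Attr := ⟨p, args.map (VTerm.subst σ)⟩ with ha
    have hjust : ∀ D ∈ C, ∃ v ∈ vs, D a = Constraint.just (v.subst σ) := by
      intro D hD
      obtain ⟨c, hc, hcle⟩ := hsup D hD r hr σ (happ D hD)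
      rw [hhead] at hc
      obtain ⟨v, hv, rfl⟩ := mem_headChoice_closed.1 hc
      exact ⟨v, hv, Constraint.just_le_iff.1 (unitCDB_le_iff.1 hcle)⟩
    set S : Set Constraint := (fun Δ => Δ a) '' C with hS
    have hno : ¬ ∃ X, Constraint.noneOf X ∈ S := by
      rintro ⟨X, D, hD, hX⟩
      obtain ⟨v, hv, hDa⟩ := hjust D hD
      have hX : D a = Constraint.noneOf X := hX
      rw [hDa] at hX
      exact Constraint.noConfusion hX
    have h2 : ∃ t, Constraint.just t ∈ S := by
      obtain ⟨D, hD⟩ := hne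
      obtain ⟨v, hv, hDa⟩ := hjust D hD
      exact ⟨v.subst σ, D, hD, hDa⟩
    have hval : CDB.cInf C a = Constraint.just h2.choose := by
      show Constraint.cInf S = _
      rw [Constraint.cInf, dif_neg hno, dif_pos h2]
    obtain ⟨D₁, hD₁, hD₁a⟩ := h2.choose_spec
    have hD₁a : D₁ a = Constraint.just h2.choose := hD₁a
    obtain ⟨v₁, hv₁, hv₁a⟩ := hjust D₁ hD₁
    have : h2.choose = v₁.subst σ := by
      rw [hD₁a] at hv₁a
      injection hv₁a
    refine ⟨_, mem_headChoice_closed.2 ⟨v₁, hv₁, rfl⟩, unitCDB_le_iff.2 ?_⟩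
    rw [hval, this]
    exact Constraint.le_refl _
  | opn p args v =>
    set a : Attr := ⟨p, args.map (VTerm.subst σ)⟩ with ha
    set w : GTerm := v.subst σ with hw
    have hs : ∀ D ∈ C, Constraint.just w ≤ D a ∨ Constraint.noneOf {w} ≤ D a := by
      intro D hD
      obtain ⟨c, hc, hcle⟩ := hsup D hD r hr σ (happ D hD)
      rw [hhead] at hc
      rcases mem_headChoice_opn.1 hc with rfl | rfl
      · exact Or.inl (unitCDB_le_iff.1 hcle)
      · exact Or.inr (unitCDB_le_iff.1 hcle)
    set S : Set Constraint := (fun Δ => Δ a) '' C with hS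
    by_cases hno : ∃ X, Constraint.noneOf X ∈ S
    · have hval : CDB.cInf C a = Constraint.noneOf (⋂₀ {X | Constraint.noneOf X ∈ S}) := by
        show Constraint.cInf S = _
        rw [Constraint.cInf, dif_pos hno]
      have hwmem : w ∈ ⋂₀ {X | Constraint.noneOf X ∈ S} := by
        refine Set.mem_sInter.2 ?_
        rintro X hX
        obtain ⟨D, hD, hDa⟩ := hX
        have hDa : D a = Constraint.noneOf X := hDa
        rcases hs D hD with h1 | h1
        · rw [hDa] at h1; exact h1.elim
        · rw [hDa] at h1
          simp only [Constraint.noneOf_le_noneOf, Set.singleton_subset_iff] at h1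
          exact h1
      refine ⟨_, mem_headChoice_opn.2 (Or.inr rfl), unitCDB_le_iff.2 ?_⟩
      rw [hval]
      show ({w} : Set GTerm) ⊆ _
      rw [Set.singleton_subset_iff]
      exact hwmem
    · have h2 : ∃ t, Constraint.just t ∈ S := by
        obtain ⟨D, hD⟩ := hne
        cases hDa : D a with
        | noneOf X => exact (hno ⟨X, D, hD, hDa⟩).elim
        | just t => exact ⟨t, D, hD, hDa⟩
      have hval : CDB.cInf C a = Constraint.just h2.choose := by
        show Constraint.cInf S = _
        rw [Constraint.cInf, dif_neg hno, dif_pos h2]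
      obtain ⟨D₁, hD₁, hD₁a⟩ := h2.choose_spec
      have hD₁a : D₁ a = Constraint.just h2.choose := hD₁a
      rcases hs D₁ hD₁ with h1 | h1
      · refine ⟨_, mem_headChoice_opn.2 (Or.inl rfl), unitCDB_le_iff.2 ?_⟩
        rw [hval, ← hD₁a]
        exact h1
      · refine ⟨_, mem_headChoice_opn.2 (Or.inr rfl), unitCDB_le_iff.2 ?_⟩
        rw [hval, ← hD₁a]
        exact h1

lemma exists_minimal_model_le {P : Program} {E : CDB} (hE : Supported P E) :
    ∃ M : CDB, Supported P M ∧ M ≤ E ∧ ∀ D', Supported P D' → D' ≤ M → D' = M := by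
  set T : Set CDB := {D : CDB | Supported P D ∧ D ≤ E} with hT
  have hzorn := exists_maximal_of_chains_bounded
    (r := fun (x y : T) => (y : CDB) ≤ (x : CDB)) ?_ ?_
  · obtain ⟨m, hm⟩ := hzorn
    refine ⟨m.1, m.2.1, m.2.2, ?_⟩
    intro D' hD'1 hD'2
    have hD'T : D' ∈ T := ⟨hD'1, CDB.le_trans hD'2 m.2.2⟩
    have := hm ⟨D', hD'T⟩ hD'2
    exact CDB.le_antisymm hD'2 this
  · -- chains are bounded
    intro c hc
    rcases Set.eq_empty_or_nonempty c with rfl | hne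
    · exact ⟨⟨E, hE, CDB.le_refl E⟩, by rintro a ⟨⟩⟩
    · set C : Set CDB := Subtype.val '' c with hC
      have hCne : C.Nonempty := hne.image _
      have hCchain : ∀ D ∈ C, ∀ F ∈ C, D ≤ F ∨ F ≤ D := by
        rintro D ⟨x, hx, rfl⟩ F ⟨y, hy, rfl⟩
        by_cases hxy : x = y
        · subst hxy; exact Or.inl (CDB.le_refl _)
        · rcases hc hx hy hxy with h | h
          · exact Or.inr h
          · exact Or.inl h
      have hCsup : ∀ D ∈ C, Supported P D := by
        rintro D ⟨x, hx, rfl⟩; exact x.2.1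
      have hinf_sup : Supported P (CDB.cInf C) := supported_cInf hCne hCchain hCsup
      have hinf_leE : CDB.cInf C ≤ E := by
        obtain ⟨D₀, hD₀⟩ := hCne
        refine CDB.le_trans (CDB.cInf_le hCchain hD₀) ?_
        obtain ⟨x, hx, rfl⟩ := hD₀
        exact x.2.2
      refine ⟨⟨CDB.cInf C, hinf_sup, hinf_leE⟩, ?_⟩
      intro x hx
      exact CDB.cInf_le hCchain ⟨x, hx, rfl⟩
  · -- transitivity
    intro a b c h1 h2
    exact CDB.le_trans h2 h1

end Aux5

section Aux6

lemma mem_ChoiceSJoin_iff {S : Set (Set CDB)} {E : CDB} :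
    E ∈ ChoiceSJoin S ↔ ∃ f : ↥S → CDB, (∀ i, f i ∈ i.1) ∧
      Compatible (Set.range f) ∧ E = CDB.lub (Set.range f) :=
  Iff.rfl

lemma choiceSJoin_eq_of_mem {L : Set (Set CDB)} {M : Set CDB}
    (hLM : M ∈ L) (hcs : ∀ C ∈ L, IsChoiceSet C) (hlb : ∀ C ∈ L, ChoiceLE C M) :
    ChoiceSJoin L = M := by
  ext E
  rw [mem_ChoiceSJoin_iff]
  constructor
  · rintro ⟨f, hf, ⟨U, hU⟩, rfl⟩
    set i₀ : ↥L := ⟨M, hLM⟩ with hi₀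
    have h1 : ∀ i : ↥L, f i ≤ f i₀ := by
      intro i
      obtain ⟨D₁, hD₁, hD₁le⟩ := hlb i.1 i.2 (f i₀) (hf i₀)
      have hfiU : f i ≤ U := hU _ ⟨i, rfl⟩
      have hD₁U : D₁ ≤ U := CDB.le_trans hD₁le (hU _ ⟨i₀, rfl⟩)
      have : f i = D₁ := hcs i.1 i.2 (f i) (hf i) D₁ hD₁ (compat_of_le hfiU hD₁U)
      rw [this]; exact hD₁le
    have heq : CDB.lub (Set.range f) = f i₀ :=
      CDB.le_antisymm
        (CDB.lub_le (by rintro x ⟨i, rfl⟩; exact h1 i))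
        (CDB.le_lub (u := U) (by rintro x ⟨i, rfl⟩; exact hU _ ⟨i, rfl⟩) ⟨i₀, rfl⟩)
    rw [heq]
    exact hf i₀
  · intro hE
    have ex : ∀ C : ↥L, ∃ c, c ∈ C.1 ∧ c ≤ E := by
      intro C
      obtain ⟨c, hc, hle⟩ := hlb C.1 C.2 E hE
      exact ⟨c, hc, hle⟩
    refine ⟨fun C => (ex C).choose, fun C => (ex C).choose_spec.1, ⟨E, ?_⟩, ?_⟩
    · rintro x ⟨C, rfl⟩; exact (ex C).choose_spec.2
    · set i₀ : ↥L := ⟨M, hLM⟩ with hi₀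
      have hME : (ex i₀).choose = E :=
        hcs M hLM _ (ex i₀).choose_spec.1 E hE
          (compat_of_le (ex i₀).choose_spec.2 (CDB.le_refl E))
      refine (CDB.le_antisymm ?_ ?_).symm
      · exact CDB.lub_le (by rintro x ⟨C, rfl⟩; exact (ex C).choose_spec.2)
      · exact CDB.le_lub (u := E) (by rintro x ⟨C, rfl⟩; exact (ex C).choose_spec.2) ⟨i₀, hME⟩

end Aux6

/-- `lfp T_P*` contains exactly the minimal models of `P`. -/
theorem lfp_eq_minimal_models (P : Program) (hP : Program.WFP P) (D : CDB) :
    D ∈ lfpTPs P ↔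
      (TP P D = {D} ∧ ∀ D' : CDB, TP P D' = {D'} → D' ≤ D → D' = D) := by
  classical
  set M : Set CDB := {E : CDB | TP P E = {E} ∧ ∀ D', TP P D' = {D'} → D' ≤ E → D' = E}
    with hM
  have hMcs : IsChoiceSet M := minimal_models_choiceSet P
  -- M is a prefixed point
  have hMS : M ∈ { C : Set CDB | IsChoiceSet C ∧ ChoiceLE (TPs P C) C } := by
    refine ⟨hMcs, ?_⟩
    intro D₂ h₂
    refine ⟨D₂, ⟨D₂, h₂, ?_⟩, CDB.le_refl _⟩
    rw [h₂.1]; rfl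
  -- M is a lower bound of all prefixed points
  have hML : ∀ X ∈ { C : Set CDB | IsChoiceSet C ∧ ChoiceLE (TPs P C) C }, ChoiceLE M X := by
    rintro X ⟨hXcs, hXpre⟩ E hEX
    have hEmod : TP P E = {E} := model_of_mem_prefixed hXcs hXpre hEX
    obtain ⟨Mm, h1, h2, h3⟩ := exists_minimal_model_le (model_iff_supported.1 hEmod)
    refine ⟨Mm, ⟨TP_eq_singleton_of_supported h1, ?_⟩, h2⟩
    intro D' hD' hle
    exact h3 D' (model_iff_supported.1 hD') hle
  have hM_L : M ∈ { C : Set CDB | IsChoiceSet C ∧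
      ∀ X ∈ { C : Set CDB | IsChoiceSet C ∧ ChoiceLE (TPs P C) C }, ChoiceLE C X } :=
    ⟨hMcs, hML⟩
  have key : lfpTPs P = M := by
    rw [lfpTPs, ChoiceMeet]
    exact choiceSJoin_eq_of_mem hM_L (fun C hC => hC.1) (fun C hC => hC.2 M hMS)
  rw [key]
  exact Iff.rfl

end FCLP
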